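/- arXiv:2511.14741 — 8 statements merged into one kernel-verified Lean document; each statement's English description precedes it below -/
import Mathlib

section
/- Let λ₁ > 0 and let λ₂ : ℕ → ℝ be strictly positive and strictly increasing (λ₂(i+1) > λ₂(i) for all i). Write p_i = e^{−λ₁} λ₁^i / i! for the Poisson weights. If the series ∑_{i=0}^∞ λ₂(i) p_i and ∑_{i=0}^∞ i·λ₂(i) p_i are summable, then ∑_{i=0}^∞ i·λ₂(i) p_i − λ₁ · ∑_{i=0}^∞ λ₂(i) p_i > 0; that is, the covariance of X₁ and X₂ in the bivariate pseudo-Poisson model is strictly positive. -/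
open Real

/-- In the bivariate pseudo-Poisson model, if the conditional rate `λ₂` is strictly
positive and strictly increasing, then `Cov(X₁, X₂) > 0`. -/
theorem pseudoPoisson_cov_pos (l1 : ℝ) (hl1 : 0 < l1) (l2 : ℕ → ℝ)
    (hpos : ∀ i, 0 < l2 i) (hinc : ∀ i, l2 i < l2 (i + 1))
    (p : ℕ → ℝ) (hp : ∀ i, p i = Real.exp (-l1) * l1 ^ i / (Nat.factorial i))
    (h1 : Summable (fun i => l2 i * p i))
    (h2 : Summable (fun (i : ℕ) => (i : ℝ) * l2 i * p i)) :
    (∑' i : ℕ, (i : ℝ) * l2 i * p i) - l1 * (∑' i : ℕ, l2 i * p i) > 0 := by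
  have hppos : ∀ i, 0 < p i := by
    intro i
    rw [hp i]
    positivity
  -- key identity: (i+1) * p (i+1) = l1 * p i
  have key : ∀ i : ℕ, ((i : ℝ) + 1) * l2 (i + 1) * p (i + 1) = l1 * (l2 (i + 1) * p i) := by
    intro i
    rw [hp i, hp (i + 1)]
    have hf : (Nat.factorial (i + 1) : ℝ) = ((i : ℝ) + 1) * Nat.factorial i := by
      rw [Nat.factorial_succ]
      push_cast
      ring
    rw [hf]
    have h0 : (Nat.factorial i : ℝ) ≠ 0 := Nat.cast_ne_zero.mpr (Nat.factorial_ne_zero i)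
    have h1 : ((i : ℝ) + 1) ≠ 0 := by positivity
    field_simp
    ring
  -- summability of shifted series
  have hs2 : Summable (fun i : ℕ => ((i : ℝ) + 1) * l2 (i + 1) * p (i + 1)) := by
    have := (summable_nat_add_iff 1).mpr h2
    simpa [Nat.cast_add] using this
  have hs3 : Summable (fun i : ℕ => l2 (i + 1) * p i) := by
    have : Summable (fun i : ℕ => l1⁻¹ * (((i : ℝ) + 1) * l2 (i + 1) * p (i + 1))) :=
      hs2.mul_left _
    refine this.congr fun i => ?_
    rw [key i, inv_mul_cancel_left₀ (ne_of_gt hl1)]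
  -- rewrite first tsum
  have ht : (∑' i : ℕ, (i : ℝ) * l2 i * p i) = l1 * ∑' i : ℕ, l2 (i + 1) * p i := by
    rw [Summable.tsum_eq_zero_add h2]
    simp only [Nat.cast_zero, zero_mul, zero_add]
    rw [← tsum_mul_left]
    congr 1
    funext i
    push_cast
    rw [key i]
  rw [ht, ← mul_sub]
  apply mul_pos hl1
  rw [sub_pos, ← sub_pos, ← Summable.tsum_sub hs3 h1]
  have hsum : Summable (fun i : ℕ => l2 (i + 1) * p i - l2 i * p i) := hs3.sub h1
  refine Summable.tsum_pos hsum (fun i => ?_) 0 ?_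
  · have := hinc i
    nlinarith [hppos i, hpos i]
  · have := hinc 0
    nlinarith [hppos 0, hpos 0]
end

section
/- Let λ₁ > 0 and let λ₂ : ℕ → ℝ be strictly positive and strictly decreasing (λ₂(i+1) < λ₂(i) for all i). Write p_i = e^{−λ₁} λ₁^i / i!. If the series ∑_{i=0}^∞ λ₂(i) p_i and ∑_{i=0}^∞ i·λ₂(i) p_i are summable, then ∑_{i=0}^∞ i·λ₂(i) p_i − λ₁ · ∑_{i=0}^∞ λ₂(i) p_i < 0; that is, the covariance of X₁ and X₂ in the bivariate pseudo-Poisson model is strictly negative. -/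
open Real

/-- In the bivariate pseudo-Poisson model, if the conditional rate `λ₂` is strictly
positive and strictly decreasing, then `Cov(X₁, X₂) < 0`. -/
theorem pseudoPoisson_cov_neg (l1 : ℝ) (hl1 : 0 < l1) (l2 : ℕ → ℝ)
    (hpos : ∀ i, 0 < l2 i) (hdec : ∀ i, l2 (i + 1) < l2 i)
    (p : ℕ → ℝ) (hp : ∀ i, p i = Real.exp (-l1) * l1 ^ i / (Nat.factorial i))
    (h1 : Summable (fun i => l2 i * p i))
    (h2 : Summable (fun (i : ℕ) => (i : ℝ) * l2 i * p i)) :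
    (∑' i : ℕ, (i : ℝ) * l2 i * p i) - l1 * (∑' i : ℕ, l2 i * p i) < 0 := by
  have hppos : ∀ i, 0 < p i := by
    intro i
    rw [hp]
    positivity
  have key : ∀ i : ℕ, ((i + 1 : ℕ) : ℝ) * l2 (i + 1) * p (i + 1)
      = l1 * (l2 (i + 1) * p i) := by
    intro i
    rw [hp, hp, Nat.factorial_succ]
    have hfac : (Nat.factorial i : ℝ) ≠ 0 := by positivity
    push_cast
    field_simp
    ring
  have hshift : Summable (fun i : ℕ => ((i + 1 : ℕ) : ℝ) * l2 (i + 1) * p (i + 1)) :=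
    (summable_nat_add_iff 1).2 h2
  have hsum' : Summable (fun i : ℕ => l2 (i + 1) * p i) := by
    have : (fun i : ℕ => l2 (i + 1) * p i)
        = fun i : ℕ => (1 / l1) * (((i + 1 : ℕ) : ℝ) * l2 (i + 1) * p (i + 1)) := by
      funext i
      rw [key i]
      field_simp
    rw [this]
    exact hshift.mul_left _
  have htsum : (∑' i : ℕ, (i : ℝ) * l2 i * p i) = l1 * ∑' i : ℕ, l2 (i + 1) * p i := by
    rw [Summable.tsum_eq_zero_add h2]
    simp only [Nat.cast_zero, zero_mul]
    rw [zero_add]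
    rw [tsum_congr key]
    exact tsum_mul_left
  rw [htsum, ← mul_sub, ← Summable.tsum_sub hsum' h1]
  have hneg : (∑' i : ℕ, (l2 (i + 1) * p i - l2 i * p i)) < 0 := by
    have h0 : (0 : ℝ) = ∑' _ : ℕ, (0 : ℝ) := by simp
    rw [h0]
    refine Summable.tsum_lt_tsum (f := fun i => l2 (i + 1) * p i - l2 i * p i) (i := 0)
      (fun i => ?_) ?_ (hsum'.sub h1) summable_zero
    · show l2 (i + 1) * p i - l2 i * p i ≤ 0
      nlinarith [hppos i, hdec i]
    · show l2 (0 + 1) * p 0 - l2 0 * p 0 < 0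
      nlinarith [hppos 0, hdec 0]
  nlinarith
end

section
/- Let λ₁ > 0 and let λ₂ : ℕ → ℝ be strictly positive, and write p_i = e^{−λ₁} λ₁^i / i!. If the series ∑_{i=0}^∞ λ₂(i) p_i and ∑_{i=0}^∞ λ₂(i)² p_i are summable, then ∑_{i=0}^∞ (λ₂(i) + λ₂(i)²) p_i − (∑_{i=0}^∞ λ₂(i) p_i)² ≥ ∑_{i=0}^∞ λ₂(i) p_i; that is, in the bivariate pseudo-Poisson model Var(X₂) ≥ E(X₂), so X₂ is always (weakly) overdispersed. -/
open Real

/-- In the bivariate pseudo-Poisson model, `Var(X₂) ≥ E(X₂)`: the second coordinate is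
always (weakly) overdispersed. -/
theorem pseudoPoisson_overdispersed (l1 : ℝ) (hl1 : 0 < l1) (l2 : ℕ → ℝ)
    (hpos : ∀ i, 0 < l2 i)
    (p : ℕ → ℝ) (hp : ∀ i, p i = Real.exp (-l1) * l1 ^ i / (Nat.factorial i))
    (h1 : Summable (fun i => l2 i * p i))
    (h2 : Summable (fun i => (l2 i) ^ 2 * p i)) :
    (∑' i : ℕ, (l2 i + (l2 i) ^ 2) * p i) - (∑' i : ℕ, l2 i * p i) ^ 2 ≥
      ∑' i : ℕ, l2 i * p i := by
  have hpfun : p = fun i => Real.exp (-l1) * (l1 ^ i / (Nat.factorial i)) := by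
    funext i; rw [hp i]; ring
  have hsp : Summable p := by
    rw [hpfun]
    exact (Real.summable_pow_div_factorial l1).mul_left _
  have hsump : ∑' i, p i = 1 := by
    rw [hpfun, tsum_mul_left]
    have : ∑' i : ℕ, l1 ^ i / (Nat.factorial i) = Real.exp l1 := by
      rw [Real.exp_eq_exp_ℝ, NormedSpace.exp_eq_tsum_div]
    rw [this, ← Real.exp_add]
    simp
  set m := ∑' i, l2 i * p i with hm
  -- key: ∑ l2² p ≥ m²
  have hs3 : Summable (fun i => (l2 i - m) ^ 2 * p i) := by
    have : (fun i => (l2 i - m) ^ 2 * p i) =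
        fun i => (l2 i) ^ 2 * p i - (2 * m) * (l2 i * p i) + m ^ 2 * p i := by
      funext i; ring
    rw [this]
    exact ((h2.sub (h1.mul_left (2 * m))).add (hsp.mul_left (m ^ 2)))
  have hpnn : ∀ i, 0 ≤ p i := fun i => by
    rw [hp i]
    positivity
  have hnn : 0 ≤ ∑' i, (l2 i - m) ^ 2 * p i :=
    tsum_nonneg fun i => mul_nonneg (sq_nonneg _) (hpnn i)
  have hexpand : ∑' i, (l2 i - m) ^ 2 * p i =
      (∑' i, (l2 i) ^ 2 * p i) - 2 * m * m + m ^ 2 * 1 := by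
    have e1 : (fun i => (l2 i - m) ^ 2 * p i) =
        fun i => ((l2 i) ^ 2 * p i - (2 * m) * (l2 i * p i)) + m ^ 2 * p i := by
      funext i; ring
    rw [e1, Summable.tsum_add (h2.sub (h1.mul_left (2 * m))) (hsp.mul_left (m ^ 2)),
      Summable.tsum_sub h2 (h1.mul_left (2 * m)), tsum_mul_left, tsum_mul_left, hsump, ← hm]
  have hkey : m ^ 2 ≤ ∑' i, (l2 i) ^ 2 * p i := by nlinarith [hnn, hexpand]
  have hsplit : ∑' i, (l2 i + (l2 i) ^ 2) * p i =
      m + ∑' i, (l2 i) ^ 2 * p i := by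
    have e : (fun i => (l2 i + (l2 i) ^ 2) * p i) =
        fun i => l2 i * p i + (l2 i) ^ 2 * p i := by funext i; ring
    rw [e, Summable.tsum_add h1 h2]
  rw [hsplit]
  linarith
end

section
/- Fix α > 0, real parameters β, δ, and ν ∈ (0,1), and set λ₂(i) = δ + β(1 − ν^i) and p_i = e^{−α} α^i / i!. Then ∑_{i=0}^∞ i·λ₂(i) p_i − α ∑_{i=0}^∞ λ₂(i) p_i = α β (1 − ν) e^{α(ν−1)}. In particular, in the exponential pseudo-Poisson model Cov(X₁, X₂) = α β (1 − ν) e^{α(ν−1)}, whose sign equals the sign of β. -/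
/-!
Since `λ₂(i) = (δ + β) - β ν^i`, everything reduces to the Poisson generating function
`E[s^X] = e^{α(s-1)}` and its companion `E[X s^X] = α s e^{α(s-1)}`. The constant part of `λ₂`
contributes no covariance, and the `ν^X` part contributes `-β (α ν - α) e^{α(ν-1)}`.
-/

open Real Nat

theorem Real.hasSum_pow_div_factorial (x : ℝ) : HasSum (fun n : ℕ => x ^ n / n !) (exp x) := by
  rw [exp_eq_exp_ℝ]
  exact NormedSpace.expSeries_div_hasSum_exp x

theorem Real.hasSum_natCast_mul_pow_div_factorial (x : ℝ) :
    HasSum (fun n : ℕ => n * x ^ n / n !) (x * exp x) := by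
  rw [← hasSum_nat_add_iff' 1]
  convert! (hasSum_pow_div_factorial x).mul_left x using 1
  · funext n
    rw [factorial_succ, pow_succ]
    push_cast
    field_simp
  · simp

theorem hasSum_pow_mul_poisson (α s : ℝ) :
    HasSum (fun i : ℕ => s ^ i * (exp (-α) * α ^ i / i !)) (exp (α * (s - 1))) := by
  convert! (hasSum_pow_div_factorial (α * s)).mul_left (exp (-α)) using 1
  · funext i
    ring
  · rw [← exp_add]
    ring_nf

theorem hasSum_natCast_mul_pow_mul_poisson (α s : ℝ) :
    HasSum (fun i : ℕ => i * s ^ i * (exp (-α) * α ^ i / i !)) (α * s * exp (α * (s - 1))) := by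
  convert! (hasSum_natCast_mul_pow_div_factorial (α * s)).mul_left (exp (-α)) using 1
  · funext i
    ring
  · rw [mul_left_comm, ← exp_add]
    ring_nf

theorem expPseudoPoisson_cov_general (α β δ ν : ℝ) :
    (∑' i : ℕ, (i : ℝ) * (δ + β * (1 - ν ^ i)) *
        (Real.exp (-α) * α ^ i / (Nat.factorial i))) -
      α * (∑' i : ℕ, (δ + β * (1 - ν ^ i)) *
        (Real.exp (-α) * α ^ i / (Nat.factorial i))) =
      α * β * (1 - ν) * Real.exp (α * (ν - 1)) := by
  have hmean : HasSum (fun i : ℕ => (δ + β * (1 - ν ^ i)) * (exp (-α) * α ^ i / i !))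
      ((δ + β) - β * exp (α * (ν - 1))) := by
    convert! ((hasSum_pow_mul_poisson α 1).mul_left (δ + β)).sub
      ((hasSum_pow_mul_poisson α ν).mul_left β) using 1
    · funext i
      ring
    · simp
  have hmoment : HasSum (fun i : ℕ => i * (δ + β * (1 - ν ^ i)) * (exp (-α) * α ^ i / i !))
      ((δ + β) * α - β * (α * ν * exp (α * (ν - 1)))) := by
    convert! ((hasSum_natCast_mul_pow_mul_poisson α 1).mul_left (δ + β)).sub
      ((hasSum_natCast_mul_pow_mul_poisson α ν).mul_left β) using 1
    · funext i
      ring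
    · simp
  rw [hmoment.tsum_eq, hmean.tsum_eq]
  ring

/-- In the exponential pseudo-Poisson model, with conditional rate
`λ₂(i) = δ + β(1 − ν^i)`, the covariance equals `α β (1 − ν) e^{α(ν−1)}`. -/
theorem expPseudoPoisson_cov (α β δ ν : ℝ) (hα : 0 < α) (hν0 : 0 < ν) (hν1 : ν < 1) :
    (∑' i : ℕ, (i : ℝ) * (δ + β * (1 - ν ^ i)) *
        (Real.exp (-α) * α ^ i / (Nat.factorial i))) -
      α * (∑' i : ℕ, (δ + β * (1 - ν ^ i)) *
        (Real.exp (-α) * α ^ i / (Nat.factorial i))) =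
      α * β * (1 - ν) * Real.exp (α * (ν - 1)) :=
  expPseudoPoisson_cov_general α β δ ν
end

section
/- Fix α > 0, real parameters β, δ, and ν ∈ (0,1), and set λ₂(i) = δ + β(1 − ν^i) and p_i = e^{−α} α^i / i!. Then ∑_{i=0}^∞ (λ₂(i) + λ₂(i)²) p_i − (∑_{i=0}^∞ λ₂(i) p_i)² = δ + β(1 − e^{α(ν−1)}) + β²(e^{α(ν²−1)} − e^{2α(ν−1)}). In particular, in the exponential pseudo-Poisson model Var(X₂) = δ + β(1 − e^{α(ν−1)}) + β²(e^{α(ν²−1)} − e^{2α(ν−1)}). -/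
open Real

lemma tsum_pow_div_factorial_eq (x : ℝ) :
    ∑' i : ℕ, x ^ i / (Nat.factorial i) = Real.exp x := by
  rw [Real.exp_eq_exp_ℝ, NormedSpace.exp_eq_tsum_div]

lemma aux_sum (α ν c0 c1 c2 : ℝ) :
    ∑' i : ℕ, (c0 + c1 * ν ^ i + c2 * (ν ^ 2) ^ i) *
        (Real.exp (-α) * α ^ i / (Nat.factorial i)) =
      c0 + c1 * Real.exp (α * (ν - 1)) + c2 * Real.exp (α * (ν ^ 2 - 1)) := by
  have h1 := Real.summable_pow_div_factorial α
  have h2 := Real.summable_pow_div_factorial (ν * α)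
  have h3 := Real.summable_pow_div_factorial (ν ^ 2 * α)
  have key : ∀ i : ℕ, (c0 + c1 * ν ^ i + c2 * (ν ^ 2) ^ i) *
        (Real.exp (-α) * α ^ i / (Nat.factorial i)) =
      Real.exp (-α) * (c0 * (α ^ i / (Nat.factorial i))
        + (c1 * ((ν * α) ^ i / (Nat.factorial i))
        + c2 * ((ν ^ 2 * α) ^ i / (Nat.factorial i)))) := by
    intro i
    rw [mul_pow, mul_pow]
    ring
  rw [tsum_congr key, tsum_mul_left, Summable.tsum_add ((h1.mul_left c0))
    (((h2.mul_left c1)).add ((h3.mul_left c2))),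
    Summable.tsum_add (h2.mul_left c1) (h3.mul_left c2),
    tsum_mul_left, tsum_mul_left, tsum_mul_left,
    tsum_pow_div_factorial_eq, tsum_pow_div_factorial_eq, tsum_pow_div_factorial_eq]
  have e1 : Real.exp (-α) * Real.exp α = 1 := by
    rw [← Real.exp_add]; simp
  have e2 : Real.exp (-α) * Real.exp (ν * α) = Real.exp (α * (ν - 1)) := by
    rw [← Real.exp_add]; ring_nf
  have e3 : Real.exp (-α) * Real.exp (ν ^ 2 * α) = Real.exp (α * (ν ^ 2 - 1)) := by
    rw [← Real.exp_add]; ring_nf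
  linear_combination c0 * e1 + c1 * e2 + c2 * e3

/-- In the exponential pseudo-Poisson model, with conditional rate
`λ₂(i) = δ + β(1 − ν^i)`, we have
`Var(X₂) = δ + β(1 − e^{α(ν−1)}) + β²(e^{α(ν²−1)} − e^{2α(ν−1)})`. -/
theorem expPseudoPoisson_var (α β δ ν : ℝ) (hα : 0 < α) (hν0 : 0 < ν) (hν1 : ν < 1) :
    (∑' i : ℕ, ((δ + β * (1 - ν ^ i)) + (δ + β * (1 - ν ^ i)) ^ 2) *
        (Real.exp (-α) * α ^ i / (Nat.factorial i))) -
      (∑' i : ℕ, (δ + β * (1 - ν ^ i)) *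
        (Real.exp (-α) * α ^ i / (Nat.factorial i))) ^ 2 =
      δ + β * (1 - Real.exp (α * (ν - 1))) +
        β ^ 2 * (Real.exp (α * (ν ^ 2 - 1)) - Real.exp (2 * α * (ν - 1))) := by
  have s1 : (∑' i : ℕ, ((δ + β * (1 - ν ^ i)) + (δ + β * (1 - ν ^ i)) ^ 2) *
        (Real.exp (-α) * α ^ i / (Nat.factorial i))) =
      ((δ + β) + (δ + β) ^ 2) + (-(β + 2 * (δ + β) * β)) * Real.exp (α * (ν - 1))
        + β ^ 2 * Real.exp (α * (ν ^ 2 - 1)) := by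
    rw [← aux_sum α ν ((δ + β) + (δ + β) ^ 2) (-(β + 2 * (δ + β) * β)) (β ^ 2)]
    apply tsum_congr
    intro i
    have : (ν ^ 2) ^ i = (ν ^ i) ^ 2 := by ring
    rw [this]
    ring
  have s2 : (∑' i : ℕ, (δ + β * (1 - ν ^ i)) *
        (Real.exp (-α) * α ^ i / (Nat.factorial i))) =
      (δ + β) + (-β) * Real.exp (α * (ν - 1)) + 0 * Real.exp (α * (ν ^ 2 - 1)) := by
    rw [← aux_sum α ν (δ + β) (-β) 0]
    apply tsum_congr
    intro i
    ring
  rw [s1, s2]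
  have e4 : Real.exp (2 * α * (ν - 1)) = Real.exp (α * (ν - 1)) ^ 2 := by
    rw [← Real.exp_nat_mul]
    norm_num
    ring_nf
  rw [e4]
  ring
end

section
/- For every α > 0, every ν ∈ (0,1), and every real β ≠ 0, one has β²(e^{α(ν²−1)} − e^{2α(ν−1)}) > 0; consequently, in the exponential pseudo-Poisson model the variance of X₂ strictly exceeds its mean: Var(X₂) − E(X₂) = β²(e^{α(ν²−1)} − e^{2α(ν−1)}) > 0. -/
open Real

/-- In the exponential pseudo-Poisson model the variance of `X₂` strictly exceeds its
mean: `Var(X₂) − E(X₂) = β²(e^{α(ν²−1)} − e^{2α(ν−1)}) > 0`. -/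
theorem expPseudoPoisson_var_gt_mean (α β ν : ℝ) (hα : 0 < α) (hν0 : 0 < ν) (hν1 : ν < 1)
    (hβ : β ≠ 0) :
    β ^ 2 * (Real.exp (α * (ν ^ 2 - 1)) - Real.exp (2 * α * (ν - 1))) > 0 := by
  have h1 : 2 * α * (ν - 1) < α * (ν ^ 2 - 1) := by 
    have hne : ν - 1 ≠ 0 := by linarith
    have : 0 < α * (ν - 1) ^ 2 := by positivity
    nlinarith
  have h2 : Real.exp (2 * α * (ν - 1)) < Real.exp (α * (ν ^ 2 - 1)) := Real.exp_lt_exp.2 h1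
  have h3 : 0 < β ^ 2 := by positivity
  nlinarith
end

section
/- Fix α > 0 and for γ > 0 define F₁(γ) = ∑_{i=0}^∞ (γ/(γ+i)) α^i/i!, G₁(γ) = ∑_{i=0}^∞ ((γ+1)/(γ+1+i)) α^i/i!, and F₂(γ) = ∑_{i=0}^∞ (γ/(γ+i))² α^i/i!. Then the limit as γ → 0⁺ of α² [F₁(γ) − (γ/(γ+1)) G₁(γ)]² / (e^α F₂(γ) − F₁(γ)²) equals α²/(e^α − 1). -/
open Real Filter Topology


lemma lomax_aux_pow (α : ℝ) (hα : 0 < α) (n : ℕ) (hn : 0 < n) :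
    Tendsto (fun γ : ℝ => ∑' i : ℕ, (γ / (γ + i)) ^ n * α ^ i / (Nat.factorial i))
      (𝓝[>] 0) (𝓝 1) := by
  have hb : Summable (fun i : ℕ => α ^ i / (Nat.factorial i)) :=
    Real.summable_pow_div_factorial α
  have key := tendsto_tsum_of_dominated_convergence (𝓕 := 𝓝[>] (0:ℝ))
      (f := fun γ (i : ℕ) => (γ / (γ + i)) ^ n * α ^ i / (Nat.factorial i))
      (g := fun i : ℕ => if i = 0 then (1:ℝ) else 0)
      (bound := fun i : ℕ => α ^ i / (Nat.factorial i)) hb ?_ ?_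
  · have : (∑' i : ℕ, if i = 0 then (1:ℝ) else 0) = 1 := by
      rw [show (fun i : ℕ => if i = 0 then (1:ℝ) else 0) = fun i => if i = 0 then (1:ℝ) else 0 from rfl]
      exact tsum_ite_eq 0 1
    rwa [this] at key
  · intro k
    rcases Nat.eq_zero_or_pos k with rfl | hk
    · simp only [if_pos rfl]
      apply Tendsto.congr' (f₁ := fun _ : ℝ => (1:ℝ))
      · filter_upwards [self_mem_nhdsWithin] with γ (hγ : 0 < γ)
        simp [hγ.ne', div_self hγ.ne']
      · exact tendsto_const_nhds
    · simp only [if_neg hk.ne']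
      have h1 : Tendsto (fun γ : ℝ => γ / (γ + k)) (𝓝[>] 0) (𝓝 0) := by
        have : Tendsto (fun γ : ℝ => γ / (γ + k)) (𝓝 0) (𝓝 (0 / (0 + k))) := by
          apply Tendsto.div tendsto_id (tendsto_id.add tendsto_const_nhds)
          positivity
        simpa using this.mono_left nhdsWithin_le_nhds
      have := ((h1.pow n).mul_const (α ^ k)).div_const (Nat.factorial k : ℝ)
      simpa [zero_pow hn.ne'] using this
  · filter_upwards [self_mem_nhdsWithin] with γ (hγ : 0 < γ)
    intro k
    have h1 : 0 ≤ γ / (γ + k) := by positivity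
    have h2 : γ / (γ + k) ≤ 1 := by
      rw [div_le_one (by positivity)]
      simp
    rw [mul_div_assoc, norm_mul, Real.norm_eq_abs, Real.norm_eq_abs,
      abs_of_nonneg (by positivity : (0:ℝ) ≤ α ^ k / (Nat.factorial k)),
      abs_of_nonneg (by positivity : (0:ℝ) ≤ (γ / (γ + k)) ^ n)]
    calc (γ / (γ + k)) ^ n * (α ^ k / (Nat.factorial k))
        ≤ 1 * (α ^ k / (Nat.factorial k)) := by
          apply mul_le_mul_of_nonneg_right _ (by positivity)
          exact pow_le_one₀ h1 h2
      _ = _ := one_mul _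

lemma lomax_aux_mid (α : ℝ) (hα : 0 < α) :
    Tendsto (fun γ : ℝ => (γ / (γ + 1)) *
      (∑' i : ℕ, ((γ + 1) / (γ + 1 + i)) * α ^ i / (Nat.factorial i)))
      (𝓝[>] 0) (𝓝 0) := by
  have hb : Summable (fun i : ℕ => α ^ i / (Nat.factorial i)) :=
    Real.summable_pow_div_factorial α
  set C := ∑' i : ℕ, α ^ i / (Nat.factorial i) with hC
  apply squeeze_zero' (g := fun γ : ℝ => (γ / (γ + 1)) * C)
  · filter_upwards [self_mem_nhdsWithin] with γ (hγ : 0 < γ)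
    have : 0 ≤ γ / (γ + 1) := by positivity
    refine mul_nonneg this (tsum_nonneg fun i => by positivity)
  · filter_upwards [self_mem_nhdsWithin] with γ (hγ : 0 < γ)
    have hterm : ∀ i : ℕ, ((γ + 1) / (γ + 1 + i)) * α ^ i / (Nat.factorial i)
        ≤ α ^ i / (Nat.factorial i) := by
      intro i
      rw [mul_div_assoc]
      have h2 : (γ + 1) / (γ + 1 + i) ≤ 1 := by
        rw [div_le_one (by positivity)]; simp
      calc ((γ + 1) / (γ + 1 + i)) * (α ^ i / (Nat.factorial i))
          ≤ 1 * (α ^ i / (Nat.factorial i)) :=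
            mul_le_mul_of_nonneg_right h2 (by positivity)
        _ = _ := one_mul _
    have hsl : Summable (fun i : ℕ => ((γ + 1) / (γ + 1 + i)) * α ^ i / (Nat.factorial i)) :=
      hb.of_nonneg_of_le (fun i => by positivity) hterm
    exact mul_le_mul_of_nonneg_left (Summable.tsum_le_tsum hterm hsl hb) (by positivity)
  · have : Tendsto (fun γ : ℝ => γ / (γ + 1)) (𝓝 0) (𝓝 (0 / (0 + 1))) := by
      apply Tendsto.div tendsto_id (tendsto_id.add tendsto_const_nhds)
      norm_num
    simpa using (this.mono_left nhdsWithin_le_nhds).mul_const C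

/-- In the Lomax(η′=1, γ′) pseudo-Poisson model, the quantity
`Cov(X₁,X₂)²/(Var(X₂) − E(X₂))`, expressed through hypergeometric series, tends to
`α²/(e^α − 1)` as `γ → 0⁺`. -/
theorem lomax_mme_limit (α : ℝ) (hα : 0 < α) :
    Tendsto
      (fun γ : ℝ =>
        α ^ 2 *
            ((∑' i : ℕ, (γ / (γ + i)) * α ^ i / (Nat.factorial i)) -
              (γ / (γ + 1)) *
                (∑' i : ℕ, ((γ + 1) / (γ + 1 + i)) * α ^ i / (Nat.factorial i))) ^ 2 /
          (Real.exp α * (∑' i : ℕ, (γ / (γ + i)) ^ 2 * α ^ i / (Nat.factorial i)) -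
            (∑' i : ℕ, (γ / (γ + i)) * α ^ i / (Nat.factorial i)) ^ 2))
      (𝓝[>] 0) (𝓝 (α ^ 2 / (Real.exp α - 1))) := by
  have h1 : Tendsto (fun γ : ℝ => ∑' i : ℕ, (γ / (γ + i)) * α ^ i / (Nat.factorial i))
      (𝓝[>] 0) (𝓝 1) := by
    have := lomax_aux_pow α hα 1 one_pos
    simpa using this
  have h2 := lomax_aux_pow α hα 2 two_pos
  have hmid := lomax_aux_mid α hα
  have hnum : Tendsto
      (fun γ : ℝ => α ^ 2 *
        ((∑' i : ℕ, (γ / (γ + i)) * α ^ i / (Nat.factorial i)) -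
          (γ / (γ + 1)) *
            (∑' i : ℕ, ((γ + 1) / (γ + 1 + i)) * α ^ i / (Nat.factorial i))) ^ 2)
      (𝓝[>] 0) (𝓝 (α ^ 2)) := by
    have := ((h1.sub hmid).pow 2).const_mul (α ^ 2)
    simpa using this
  have hden : Tendsto
      (fun γ : ℝ => Real.exp α * (∑' i : ℕ, (γ / (γ + i)) ^ 2 * α ^ i / (Nat.factorial i)) -
        (∑' i : ℕ, (γ / (γ + i)) * α ^ i / (Nat.factorial i)) ^ 2)
      (𝓝[>] 0) (𝓝 (Real.exp α - 1)) := by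
    have := (h2.const_mul (Real.exp α)).sub (h1.pow 2)
    simpa using this
  have hne : Real.exp α - 1 ≠ 0 := by
    have : 1 < Real.exp α := by
      rw [show (1:ℝ) = Real.exp 0 from (Real.exp_zero).symm]
      exact Real.exp_lt_exp.mpr hα
    linarith
  exact hnum.div hden hne
end

section
/- Fix α > 0, γ > 0, η > 0 and real β, δ, and set λ₂(i) = δ + β(1 − (γ/(i+γ))^η) and p_i = e^{−α} α^i/i!. Then ∑_{i=0}^∞ i·λ₂(i) p_i − α ∑_{i=0}^∞ λ₂(i) p_i = (αβ/e^α) · (∑_{i=0}^∞ (γ/(γ+i))^η α^i/i! − ∑_{i=0}^∞ (γ/(γ+1+i))^η α^i/i!). In particular this is the covariance Cov(X₁,X₂) in the Lomax pseudo-Poisson model. -/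
open Real

/-- The covariance in the Lomax pseudo-Poisson model with conditional rate
`λ₂(i) = δ + β(1 − (γ/(i+γ))^η)`:
`Cov(X₁,X₂) = (αβ/e^α)(∑_i (γ/(γ+i))^η α^i/i! − ∑_i (γ/(γ+1+i))^η α^i/i!)`. -/
theorem lomaxPseudoPoisson_cov (α β δ γ η : ℝ) (hα : 0 < α) (hγ : 0 < γ) (hη : 0 < η) :
    (∑' i : ℕ, (i : ℝ) * (δ + β * (1 - (γ / (i + γ)) ^ η)) *
        (Real.exp (-α) * α ^ i / (Nat.factorial i))) -
      α * (∑' i : ℕ, (δ + β * (1 - (γ / (i + γ)) ^ η)) *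
        (Real.exp (-α) * α ^ i / (Nat.factorial i))) =
      α * β / Real.exp α *
        ((∑' i : ℕ, (γ / (γ + i)) ^ η * α ^ i / (Nat.factorial i)) -
          ∑' i : ℕ, (γ / (γ + 1 + i)) ^ η * α ^ i / (Nat.factorial i)) := by
  set q : ℕ → ℝ := fun i => (γ / (γ + i)) ^ η with hqdef
  set c : ℕ → ℝ := fun i => α ^ i / (Nat.factorial i) with hcdef
  have hcpos : ∀ i, 0 < c i := fun i => by
    exact div_pos (pow_pos hα i) (by exact_mod_cast Nat.factorial_pos i)
  have hqpos : ∀ i, 0 < q i := fun i =>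
    Real.rpow_pos_of_pos (div_pos hγ (by positivity)) η
  have hqle : ∀ i, q i ≤ 1 := fun i => by
    apply Real.rpow_le_one (le_of_lt (div_pos hγ (by positivity)))
    · apply div_le_one_of_le₀ <;> linarith [Nat.cast_nonneg (α := ℝ) i]
    · exact hη.le
  -- summability
  have Sc : Summable c := Real.summable_pow_div_factorial α
  have hshift : ∀ n : ℕ, ((n + 1 : ℕ) : ℝ) * c (n + 1) = α * c n := by
    intro n
    have h1 : (Nat.factorial (n+1) : ℝ) = (n+1) * Nat.factorial n := by
      rw [Nat.factorial_succ]; push_cast; ring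
    have h2 : (Nat.factorial n : ℝ) ≠ 0 := by exact_mod_cast (Nat.factorial_pos n).ne'
    simp only [hcdef, h1]
    push_cast
    field_simp
    ring
  have Sic : Summable (fun i : ℕ => (i : ℝ) * c i) := by
    rw [← summable_nat_add_iff 1]
    exact (Sc.mul_left α).congr (fun n => (hshift n).symm)
  have Sqc : Summable (fun i => q i * c i) := by
    apply Summable.of_nonneg_of_le (fun i => by positivity)
      (fun i => ?_) Sc
    calc q i * c i ≤ 1 * c i := by
          exact mul_le_mul_of_nonneg_right (hqle i) (hcpos i).le
      _ = c i := one_mul _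
  have Siqc : Summable (fun i : ℕ => (i : ℝ) * (q i * c i)) := by
    apply Summable.of_nonneg_of_le (fun i => by positivity) (fun i => ?_) Sic
    have : q i * c i ≤ c i := by
      calc q i * c i ≤ 1 * c i := mul_le_mul_of_nonneg_right (hqle i) (hcpos i).le
        _ = c i := one_mul _
    exact mul_le_mul_of_nonneg_left this (Nat.cast_nonneg i)
  -- series values
  have hexp : ∑' n : ℕ, c n = Real.exp α := by
    rw [Real.exp_eq_exp_ℝ, NormedSpace.exp_eq_tsum_div]
  have T1 : ∑' i : ℕ, (i : ℝ) * c i = α * Real.exp α := by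
    rw [Summable.tsum_eq_zero_add Sic]
    simp only [Nat.cast_zero, zero_mul, zero_add]
    rw [tsum_congr (fun n => by exact_mod_cast hshift n), tsum_mul_left, hexp]
  have T2 : ∑' i : ℕ, (i : ℝ) * (q i * c i) =
      α * ∑' n : ℕ, q (n + 1) * c n := by
    rw [Summable.tsum_eq_zero_add Siqc]
    simp only [Nat.cast_zero, zero_mul, zero_add]
    have : ∀ n : ℕ, ((n + 1 : ℕ) : ℝ) * (q (n + 1) * c (n + 1)) =
        α * (q (n + 1) * c n) := by
      intro n
      rw [show ((n + 1 : ℕ) : ℝ) * (q (n+1) * c (n+1)) = q (n+1) * (((n+1:ℕ):ℝ) * c (n+1)) by ring,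
        hshift n]; ring
    rw [tsum_congr this, tsum_mul_left]
  -- rewrite the two sums on the LHS
  set E := Real.exp (-α) with hE
  have L1 : (∑' i : ℕ, (i : ℝ) * (δ + β * (1 - (γ / (i + γ)) ^ η)) *
        (E * α ^ i / (Nat.factorial i))) =
      E * ((δ + β) * (α * Real.exp α) - β * (α * ∑' n : ℕ, q (n + 1) * c n)) := by
    have hpt : ∀ i : ℕ, (i : ℝ) * (δ + β * (1 - (γ / (i + γ)) ^ η)) *
        (E * α ^ i / (Nat.factorial i)) =
        E * ((δ + β) * ((i : ℝ) * c i) - β * ((i : ℝ) * (q i * c i))) := by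
      intro i
      have : (γ / ((i : ℝ) + γ)) = γ / (γ + (i : ℝ)) := by rw [add_comm]
      simp only [hcdef, hqdef, this]
      ring
    rw [tsum_congr hpt, tsum_mul_left, Summable.tsum_sub ((Sic.mul_left _)) ((Siqc.mul_left _)),
      tsum_mul_left, tsum_mul_left, T1, T2]
  have L2 : (∑' i : ℕ, (δ + β * (1 - (γ / (i + γ)) ^ η)) *
        (E * α ^ i / (Nat.factorial i))) =
      E * ((δ + β) * Real.exp α - β * ∑' n : ℕ, q n * c n) := by
    have hpt : ∀ i : ℕ, (δ + β * (1 - (γ / (i + γ)) ^ η)) *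
        (E * α ^ i / (Nat.factorial i)) =
        E * ((δ + β) * c i - β * (q i * c i)) := by
      intro i
      have : (γ / ((i : ℝ) + γ)) = γ / (γ + (i : ℝ)) := by rw [add_comm]
      simp only [hcdef, hqdef, this]
      ring
    rw [tsum_congr hpt, tsum_mul_left, Summable.tsum_sub ((Sc.mul_left _)) ((Sqc.mul_left _)),
      tsum_mul_left, tsum_mul_left, hexp]
  rw [L1, L2]
  -- rewrite RHS sums
  have R1 : (∑' i : ℕ, (γ / (γ + (i : ℝ))) ^ η * α ^ i / (Nat.factorial i)) =
      ∑' n : ℕ, q n * c n := by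
    refine tsum_congr fun i => ?_
    simp only [hqdef, hcdef]; ring
  have R2 : (∑' i : ℕ, (γ / (γ + 1 + (i : ℝ))) ^ η * α ^ i / (Nat.factorial i)) =
      ∑' n : ℕ, q (n + 1) * c n := by
    refine tsum_congr fun i => ?_
    have : γ + 1 + (i : ℝ) = γ + ((i : ℕ) + 1 : ℕ) := by push_cast; ring
    simp only [hqdef, hcdef, this]; ring
  rw [R1, R2]
  have hEe : E = 1 / Real.exp α := by rw [hE, Real.exp_neg]; ring
  rw [hEe]
  have h3 : Real.exp α ≠ 0 := (Real.exp_pos α).ne'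
  field_simp
  ring
end
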